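/- If a tripartite pure state |Ψ⟩_ABC has a reduced state ρ_AB satisfying the reduction criterion ρ_A ⊗ I_B ≥ ρ_AB and I_A ⊗ ρ_B ≥ ρ_AB, then rank ρ_C ≥ rank ρ_A and rank ρ_C ≥ rank ρ_B. -/

import Mathlib

open Matrix BigOperators
open scoped ComplexOrder

noncomputable section

/-- A density matrix: positive semidefinite with trace one. -/
def IsDensity {α : Type*} [Fintype α] (ρ : Matrix α α ℂ) : Prop :=
  ρ.PosSemidef ∧ ρ.trace = 1

/-- Tensor (Kronecker) product of matrices on a product index type. -/
def tens {α β : Type*} (σ : Matrix α α ℂ) (τ : Matrix β β ℂ) :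
    Matrix (α × β) (α × β) ℂ :=
  fun p q => σ p.1 q.1 * τ p.2 q.2

/-- Separability: a finite convex combination of product density matrices. -/
def SeparableState {α β : Type*} [Fintype α] [Fintype β]
    (ρ : Matrix (α × β) (α × β) ℂ) : Prop :=
  ∃ (k : ℕ) (p : Fin k → ℝ) (σ : Fin k → Matrix α α ℂ) (τ : Fin k → Matrix β β ℂ),
    (∀ i, 0 ≤ p i) ∧ ∑ i, p i = 1 ∧ (∀ i, IsDensity (σ i)) ∧ (∀ i, IsDensity (τ i)) ∧
    ρ = ∑ i, (p i : ℂ) • tens (σ i) (τ i)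

/-- Partial transpose with respect to the second system. -/
def ptransB {α β : Type*} (ρ : Matrix (α × β) (α × β) ℂ) :
    Matrix (α × β) (α × β) ℂ :=
  fun p q => ρ (p.1, q.2) (q.1, p.2)

/-- Partial trace over the second system. -/
def ptrB {α β : Type*} [Fintype β] (ρ : Matrix (α × β) (α × β) ℂ) : Matrix α α ℂ :=
  fun i k => ∑ j, ρ (i, j) (k, j)

/-- Partial trace over the first system. -/
def ptrA {α β : Type*} [Fintype α] (ρ : Matrix (α × β) (α × β) ℂ) : Matrix β β ℂ :=
  fun j l => ∑ i, ρ (i, j) (i, l)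

/-- Rank-one projection |ψ⟩⟨ψ| associated with a vector. -/
def projv {α : Type*} (ψ : α → ℂ) : Matrix α α ℂ :=
  fun x y => ψ x * (starRingEnd ℂ) (ψ y)

/-- Unit vector condition. -/
def UnitVec {α : Type*} [Fintype α] (ψ : α → ℂ) : Prop :=
  ∑ x, Complex.normSq (ψ x) = 1

/-- Two-party reduced state ρ_АБ of a tripartite pure state. -/
def rhoAB {α β γ : Type*} [Fintype γ] (ψ : α × β × γ → ℂ) :
    Matrix (α × β) (α × β) ℂ :=
  fun p q => ∑ c, ψ (p.1, p.2, c) * (starRingEnd ℂ) (ψ (q.1, q.2, c))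

def rhoBC {α β γ : Type*} [Fintype α] (ψ : α × β × γ → ℂ) :
    Matrix (β × γ) (β × γ) ℂ :=
  fun p q => ∑ a, ψ (a, p.1, p.2) * (starRingEnd ℂ) (ψ (a, q.1, q.2))

def rhoAC {α β γ : Type*} [Fintype β] (ψ : α × β × γ → ℂ) :
    Matrix (α × γ) (α × γ) ℂ :=
  fun p q => ∑ b, ψ (p.1, b, p.2) * (starRingEnd ℂ) (ψ (q.1, b, q.2))

def rhoA {α β γ : Type*} [Fintype β] [Fintype γ] (ψ : α × β × γ → ℂ) :
    Matrix α α ℂ :=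
  fun x y => ∑ b, ∑ c, ψ (x, b, c) * (starRingEnd ℂ) (ψ (y, b, c))

def rhoB {α β γ : Type*} [Fintype α] [Fintype γ] (ψ : α × β × γ → ℂ) :
    Matrix β β ℂ :=
  fun x y => ∑ a, ∑ c, ψ (a, x, c) * (starRingEnd ℂ) (ψ (a, y, c))

def rhoC {α β γ : Type*} [Fintype α] [Fintype β] (ψ : α × β × γ → ℂ) :
    Matrix γ γ ℂ :=
  fun x y => ∑ a, ∑ b, ψ (a, b, x) * (starRingEnd ℂ) (ψ (a, b, y))

/-- `x` majorizes `y` (for nonnegative vectors, with implicit zero padding):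
the sum of any `|T|` entries of `y` is dominated by some choice of at most
`|T|` entries of `x`, and the total sums agree. -/
def Majorizes {α β : Type*} [Fintype α] [Fintype β] (x : α → ℝ) (y : β → ℝ) : Prop :=
  (∀ T : Finset β, ∃ S : Finset α, S.card ≤ T.card ∧ ∑ i ∈ T, y i ≤ ∑ i ∈ S, x i) ∧
  ∑ i, x i = ∑ i, y i

/-- Von Neumann entropy of a Hermitian matrix, via its eigenvalues. -/
def vN {α : Type*} [Fintype α] [DecidableEq α] {ρ : Matrix α α ℂ}
    (h : ρ.IsHermitian) : ℝ :=
  -∑ i, h.eigenvalues i * Real.log (h.eigenvalues i)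

/-- Tensor rank of a tripartite vector: least number of product vectors summing to it. -/
def tensorRank {α β γ : Type*} [Fintype α] [Fintype β] [Fintype γ]
    (ψ : α × β × γ → ℂ) : ℕ :=
  sInf {r : ℕ | ∃ (a : Fin r → α → ℂ) (b : Fin r → β → ℂ) (c : Fin r → γ → ℂ),
    ∀ x, ψ x = ∑ i, a i x.1 * b i x.2.1 * c i x.2.2}

/-- Orthonormal family of vectors. -/
def OrthonormalFam {α : Type*} [Fintype α] {k : ℕ} (v : Fin k → α → ℂ) : Prop :=
  ∀ i j, ∑ x, (starRingEnd ℂ) (v i x) * v j x = if i = j then 1 else 0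

/-- Maximally correlated state: ρ = Σ_{i,j} c_{ij} |i_B⟩⟨j_B| ⊗ |i_C⟩⟨j_C|
for some orthonormal families. -/
def IsMaxCorrelated {β γ : Type*} [Fintype β] [Fintype γ]
    (ρ : Matrix (β × γ) (β × γ) ℂ) : Prop :=
  ∃ (k : ℕ) (c : Matrix (Fin k) (Fin k) ℂ) (e : Fin k → β → ℂ) (f : Fin k → γ → ℂ),
    OrthonormalFam e ∧ OrthonormalFam f ∧
    ∀ p q, ρ p q = ∑ i, ∑ j,
      c i j * (e i p.1 * (starRingEnd ℂ) (e j q.1)) * (f i p.2 * (starRingEnd ℂ) (f j q.2))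

/-! Write `σ = Tr_B ρ` and let `E` be the square root of the pseudo-inverse of `σ`. Conjugating
the reduction criterion `ρ ≤ σ ⊗ 1` by `E ⊗ 1` gives `0 ≤ M ≤ Π ⊗ 1 ≤ 1` for
`M = (E ⊗ 1) ρ (E ⊗ 1)`, where `Π = E σ E` is the support projection of `σ`. A matrix between
`0` and `1` has trace at most its rank, so
`rank ρ ≥ rank M ≥ tr M = tr ((E² ⊗ 1) ρ) = tr (E² σ) = tr Π = rank σ`.
For a pure state, `rank ρ_AB = rank ρ_C` since both are the rank of the coefficient matrix of
`ψ` across the cut `AB|C`. -/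

open Kronecker
open scoped MatrixOrder

namespace Matrix

variable {𝕜 m n : Type*} [RCLike 𝕜] [Fintype m] [DecidableEq m]

lemma IsHermitian.trace_cfc {A : Matrix m m 𝕜} (hA : A.IsHermitian) (f : ℝ → ℝ) :
    (cfc f A).trace = ∑ i, (f (hA.eigenvalues i) : 𝕜) := by
  rw [hA.cfc_eq, IsHermitian.cfc, Unitary.conjStarAlgAut_apply, trace_mul_cycle,
    Unitary.coe_star_mul_self, one_mul, trace_diagonal]
  rfl

lemma PosSemidef.trace_cfc_ite_pos_eq_rank {A : Matrix m m 𝕜} (hA : A.PosSemidef) :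
    (cfc (fun x : ℝ => if 0 < x then 1 else 0) A).trace = A.rank := by
  rw [hA.1.trace_cfc, hA.1.rank_eq_card_non_zero_eigs, Fintype.card_subtype]
  simp [fun i => (hA.eigenvalues_nonneg i).lt_iff_ne', Finset.card_filter]

lemma PosSemidef.re_trace_le_rank {M : Matrix m m 𝕜} (hM : M.PosSemidef) (h1 : M ≤ 1) :
    RCLike.re M.trace ≤ M.rank := by
  have hle (i : m) : hM.1.eigenvalues i ≤ 1 :=
    (CFC.le_one_iff (R := ℝ) M hM.1.isSelfAdjoint).1 h1 _ (hM.1.eigenvalues_mem_spectrum_real i)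
  rw [hM.1.trace_eq_sum_eigenvalues, hM.1.rank_eq_card_non_zero_eigs, Fintype.card_subtype]
  simp only [map_sum, RCLike.ofReal_re]
  calc ∑ i, hM.1.eigenvalues i
      = ∑ i ∈ Finset.univ.filter (hM.1.eigenvalues · ≠ 0), hM.1.eigenvalues i :=
        (Finset.sum_filter_ne_zero _).symm
    _ ≤ ∑ i ∈ Finset.univ.filter (hM.1.eigenvalues · ≠ 0), 1 := Finset.sum_le_sum fun i _ => hle i
    _ = _ := by simp

lemma kronecker_one_le_one [Fintype n] [DecidableEq n] {P : Matrix m m 𝕜} (hP : P ≤ 1) :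
    P ⊗ₖ (1 : Matrix n n 𝕜) ≤ 1 := by
  have h : (1 : Matrix (m × n) (m × n) 𝕜) = P ⊗ₖ 1 + (1 - P) ⊗ₖ 1 := by
    rw [← add_kronecker, add_sub_cancel, one_kronecker_one]
  rw [le_iff, h, add_sub_cancel_left]
  exact (le_iff.1 hP).kronecker PosSemidef.one

end Matrix

/-- This holds for every real `x` because `√x = 0` for `x ≤ 0` and `0⁻¹ = 0`. -/
lemma Real.inv_sqrt_mul_self_mul_inv_sqrt (x : ℝ) :
    (√x)⁻¹ * x * (√x)⁻¹ = if 0 < x then 1 else 0 := by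
  split_ifs with hx
  · field_simp
    exact (Real.sq_sqrt hx.le).symm
  · simp [Real.sqrt_eq_zero'.2 (not_lt.1 hx)]

section PartialTrace

variable {m n : Type*} [Fintype m] [Fintype n]

lemma trace_kronecker_one_mul [DecidableEq n] (X : Matrix m m ℂ) (ρ : Matrix (m × n) (m × n) ℂ) :
    (X ⊗ₖ (1 : Matrix n n ℂ) * ρ).trace = (X * ptrB ρ).trace := by
  simp only [Matrix.trace, Matrix.diag_apply, Matrix.mul_apply, Matrix.kroneckerMap_apply,
    Matrix.one_apply, mul_ite, mul_one, mul_zero, ite_mul, zero_mul, Fintype.sum_prod_type,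
    Finset.sum_ite_eq, Finset.mem_univ, if_true, ptrB, Finset.mul_sum]
  exact Finset.sum_congr rfl fun _ _ => Finset.sum_comm

lemma Matrix.PosSemidef.ptrB {ρ : Matrix (m × n) (m × n) ℂ} (hρ : ρ.PosSemidef) :
    (_root_.ptrB ρ).PosSemidef := by
  classical
  let V (j : n) : Matrix (m × n) m ℂ := of fun p i => if p = (i, j) then 1 else 0
  have h : _root_.ptrB ρ = ∑ j, (V j)ᴴ * ρ * V j := by
    ext
    simp [V, _root_.ptrB, mul_apply, sum_apply]
  rw [h]
  exact posSemidef_sum _ fun j _ => hρ.conjTranspose_mul_mul_same (V j)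

theorem rank_ptrB_le_of_le_kronecker_one [DecidableEq m] [DecidableEq n]
    {ρ : Matrix (m × n) (m × n) ℂ} (hρ : ρ.PosSemidef) (hred : ρ ≤ ptrB ρ ⊗ₖ 1) :
    (ptrB ρ).rank ≤ ρ.rank := by
  set σ := ptrB ρ
  have hσ : σ.PosSemidef := hρ.ptrB
  have hcont (f : ℝ → ℝ) : ContinuousOn f (spectrum ℝ σ) := σ.finite_real_spectrum.continuousOn f
  set E := cfc (fun x : ℝ => (√x)⁻¹) σ
  set D := E ⊗ₖ (1 : Matrix n n ℂ)
  have hE : star E = E := IsSelfAdjoint.star_eq (cfc_predicate _ σ)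
  have hD : star D = D := by
    rw [Matrix.star_eq_conjTranspose, Matrix.conjTranspose_kronecker, Matrix.conjTranspose_one,
      ← Matrix.star_eq_conjTranspose, hE]
  have hEσE : E * σ * E = cfc (fun x : ℝ => if 0 < x then 1 else 0) σ := by
    simp_rw [← Real.inv_sqrt_mul_self_mul_inv_sqrt]
    rw [cfc_mul _ _ σ (hcont _) (hcont _), cfc_mul _ _ σ (hcont _) (hcont _), cfc_id' ℝ σ]
  set M := star D * ρ * D
  have hM : M.PosSemidef := hρ.conjTranspose_mul_mul_same D
  have hM1 : M ≤ 1 := calc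
    M ≤ star D * (σ ⊗ₖ 1) * D := star_left_conjugate_le_conjugate hred D
    _ = (E * σ * E) ⊗ₖ (1 : Matrix n n ℂ) := by
      rw [hD, ← Matrix.mul_kronecker_mul, ← Matrix.mul_kronecker_mul, Matrix.mul_one,
        Matrix.mul_one]
    _ ≤ 1 := Matrix.kronecker_one_le_one <| hEσE ▸ cfc_le_one _ _ fun x _ => by
      split_ifs <;> norm_num
  have htr : M.trace = σ.rank := calc
    M.trace = (D * star D * ρ).trace := Matrix.trace_mul_cycle _ _ _
    _ = (E * σ * E).trace := by
      rw [hD, ← Matrix.mul_kronecker_mul, Matrix.mul_one, trace_kronecker_one_mul,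
        Matrix.trace_mul_cycle E σ E]
    _ = σ.rank := hEσE ▸ hσ.trace_cfc_ite_pos_eq_rank
  calc σ.rank ≤ M.rank := by simpa [htr] using hM.re_trace_le_rank hM1
    _ ≤ ρ.rank := (Matrix.rank_mul_le_left _ _).trans (Matrix.rank_mul_le_right _ _)

theorem rank_ptrA_le_of_le_one_kronecker [DecidableEq m] [DecidableEq n]
    {ρ : Matrix (m × n) (m × n) ℂ} (hρ : ρ.PosSemidef) (hred : ρ ≤ 1 ⊗ₖ ptrA ρ) :
    (ptrA ρ).rank ≤ ρ.rank := by
  let e := Equiv.prodComm n m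
  have hswap : ρ.submatrix e e ≤ ptrA ρ ⊗ₖ 1 := by
    have h : ptrA ρ ⊗ₖ (1 : Matrix m m ℂ) - ρ.submatrix e e =
        (1 ⊗ₖ ptrA ρ - ρ).submatrix e e := by
      ext ⟨j, i⟩ ⟨l, k⟩
      simp [e, mul_comm]
    exact Matrix.le_iff.2 (h ▸ (Matrix.le_iff.1 hred).submatrix e)
  have h : ptrB (ρ.submatrix e e) = ptrA ρ := rfl
  simpa [h, Matrix.rank_submatrix] using rank_ptrB_le_of_le_kronecker_one (hρ.submatrix e) hswap

end PartialTrace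

lemma tens_eq_kronecker {m n : Type*} (A : Matrix m m ℂ) (B : Matrix n n ℂ) :
    tens A B = A ⊗ₖ B := rfl

section PureState

variable {α β γ : Type*}

def coeffMatrix (ψ : α × β × γ → ℂ) : Matrix (α × β) γ ℂ :=
  Matrix.of fun p c => ψ (p.1, p.2, c)

lemma rhoAB_eq_coeffMatrix_mul [Fintype γ] (ψ : α × β × γ → ℂ) :
    rhoAB ψ = coeffMatrix ψ * (coeffMatrix ψ)ᴴ := by
  ext
  simp [rhoAB, coeffMatrix, Matrix.mul_apply]

lemma rhoC_eq_coeffMatrix_mul [Fintype α] [Fintype β] (ψ : α × β × γ → ℂ) :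
    rhoC ψ = (coeffMatrix ψ)ᵀ * ((coeffMatrix ψ)ᵀ)ᴴ := by
  ext
  simp [rhoC, coeffMatrix, Matrix.mul_apply, Fintype.sum_prod_type]

lemma rank_rhoC_eq_rank_rhoAB [Fintype α] [Fintype β] [Fintype γ] (ψ : α × β × γ → ℂ) :
    (rhoC ψ).rank = (rhoAB ψ).rank := by
  rw [rhoC_eq_coeffMatrix_mul, rhoAB_eq_coeffMatrix_mul, Matrix.rank_self_mul_conjTranspose,
    Matrix.rank_self_mul_conjTranspose, Matrix.rank_transpose]

lemma posSemidef_rhoAB [Fintype α] [Fintype β] [Fintype γ] (ψ : α × β × γ → ℂ) :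
    (rhoAB ψ).PosSemidef :=
  rhoAB_eq_coeffMatrix_mul ψ ▸ Matrix.posSemidef_self_mul_conjTranspose _

lemma rhoA_eq_ptrB [Fintype β] [Fintype γ] (ψ : α × β × γ → ℂ) : rhoA ψ = ptrB (rhoAB ψ) := rfl

lemma rhoB_eq_ptrA [Fintype α] [Fintype γ] (ψ : α × β × γ → ℂ) : rhoB ψ = ptrA (rhoAB ψ) := rfl

end PureState

theorem rank_env_ge_of_reduction_general {a b c : ℕ}
    (ψ : Fin a × Fin b × Fin c → ℂ)
    (hred : (tens (rhoA ψ) (1 : Matrix (Fin b) (Fin b) ℂ) - rhoAB ψ).PosSemidef ∧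
            (tens (1 : Matrix (Fin a) (Fin a) ℂ) (rhoB ψ) - rhoAB ψ).PosSemidef) :
    (rhoA ψ).rank ≤ (rhoC ψ).rank ∧ (rhoB ψ).rank ≤ (rhoC ψ).rank := by
  rw [tens_eq_kronecker, tens_eq_kronecker, rhoA_eq_ptrB, rhoB_eq_ptrA, ← Matrix.le_iff,
    ← Matrix.le_iff] at hred
  rw [rank_rhoC_eq_rank_rhoAB, rhoA_eq_ptrB, rhoB_eq_ptrA]
  exact ⟨rank_ptrB_le_of_le_kronecker_one (posSemidef_rhoAB ψ) hred.1,
    rank_ptrA_le_of_le_one_kronecker (posSemidef_rhoAB ψ) hred.2⟩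

/-- if ρ_AB satisfies the reduction criterion then
rank ρ_C ≥ rank ρ_A and rank ρ_C ≥ rank ρ_B. -/
theorem rank_env_ge_of_reduction {a b c : ℕ}
    (ψ : Fin a × Fin b × Fin c → ℂ) (hψ : UnitVec ψ)
    (hred : (tens (rhoA ψ) (1 : Matrix (Fin b) (Fin b) ℂ) - rhoAB ψ).PosSemidef ∧
            (tens (1 : Matrix (Fin a) (Fin a) ℂ) (rhoB ψ) - rhoAB ψ).PosSemidef) :
    (rhoA ψ).rank ≤ (rhoC ψ).rank ∧ (rhoB ψ).rank ≤ (rhoC ψ).rank :=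
  rank_env_ge_of_reduction_general ψ hred
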